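/- arXiv:2210.00805 — 5 statements merged into one kernel-verified Lean document; each statement's English description precedes it below -/
import Mathlib

section
/- Let c > 0 and let h : [0,c] → ℝ be a piecewise affine function with finitely many affine pieces. Let t be a positive integer and let A ⊆ ℝ be a Lebesgue measurable set such that for every y ∈ A, the set {x ∈ [0,c] : h(x) = y} has at least t elements. Then c · ‖h'‖_∞ ≥ λ(A) · t, where λ denotes the Lebesgue measure and ‖h'‖_∞ is the essential supremum of |h'|. -/
open MeasureTheory Set

/-- `h` is piecewise affine on `[0,c]` with `P` pieces given by partition points
`x 0 = 0 < x 1 < ... < x P = c`, with slope `a p` and intercept `b p` on the `p`-th piece. -/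
def PiecewiseAffinePartition (h : ℝ → ℝ) (c : ℝ) (P : ℕ) (x a b : ℕ → ℝ) : Prop :=
  x 0 = 0 ∧ x P = c ∧ (∀ p < P, x p < x (p + 1)) ∧
    ∀ p < P, ∀ y ∈ Set.Ioc (x p) (x (p + 1)), h y = a p * y + b p

/-! Outside the finite, hence null, set of values `h 0` and `b p`, a solution of `h z = y` with
`z ∈ [0, c]` lies in some piece `(x p, x (p + 1)]` whose slope is nonzero, so each piece carries at
most one solution, and `y` lies in the image of that piece. Thus every `y ∈ A` (off a null set) is
covered by at least `t` piece images, and Markov's inequality for the counting function gives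
`t λ(A) ≤ ∑ λ(image of piece p) ≤ ∑ K (x (p + 1) - x p) = c K`. -/

open scoped Finset

open Classical in
theorem MeasureTheory.measure_mul_le_sum_of_le_card {α ι : Type*} [MeasurableSpace α]
    (μ : Measure α) (s : Finset ι) {I : ι → Set α} (hI : ∀ i ∈ s, MeasurableSet (I i))
    {A : Set α} {t : ℕ} (hA : ∀ᵐ y ∂μ, y ∈ A → t ≤ #{i ∈ s | y ∈ I i}) :
    μ A * t ≤ ∑ i ∈ s, μ (I i) := by
  set g : α → ENNReal := fun y ↦ ∑ i ∈ s, (I i).indicator 1 y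
  have hg : ∀ y, g y = #{i ∈ s | y ∈ I i} := fun y ↦ by
    simp [g, indicator_apply]
  have hg_meas : Measurable g :=
    Finset.measurable_sum _ fun i hi ↦ measurable_one.indicator (hI i hi)
  calc μ A * t ≤ t * μ {y | (t : ENNReal) ≤ g y} := by
        rw [mul_comm]
        gcongr _ * ?_
        refine measure_mono_ae (hA.mono fun y hy hyA ↦ ?_)
        show (t : ENNReal) ≤ g y
        simpa [hg] using hy hyA
    _ ≤ ∫⁻ y, g y ∂μ := mul_meas_ge_le_lintegral₀ hg_meas.aemeasurable _
    _ = ∑ i ∈ s, μ (I i) := by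
        simp only [g]
        rw [lintegral_finsetSum _ fun i hi ↦ measurable_one.indicator (hI i hi)]
        exact Finset.sum_congr rfl fun i hi ↦ lintegral_indicator_one (hI i hi)

theorem exists_mem_Ioc_of_lt_of_le {α : Type*} [LinearOrder α] (x : ℕ → α) {z : α} {n : ℕ}
    (h0 : x 0 < z) (hn : z ≤ x n) : ∃ p < n, z ∈ Ioc (x p) (x (p + 1)) := by
  induction n with
  | zero => exact absurd hn h0.not_ge
  | succ m ih =>
    rcases le_or_gt z (x m) with hle | hlt
    · obtain ⟨p, hp, hmem⟩ := ih hle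
      exact ⟨p, hp.trans m.lt_succ_self, hmem⟩
    · exact ⟨m, m.lt_succ_self, hlt, hn⟩

theorem affine_mem_uIcc {a b u v z : ℝ} (hz : z ∈ Icc u v) :
    a * z + b ∈ uIcc (a * u + b) (a * v + b) := by
  rcases le_total 0 a with ha | ha
  · exact Icc_subset_uIcc ⟨by nlinarith [hz.1], by nlinarith [hz.2]⟩
  · exact Icc_subset_uIcc' ⟨by nlinarith [hz.2], by nlinarith [hz.1]⟩

theorem volume_uIcc_affine (a b u v : ℝ) :
    volume (uIcc (a * u + b) (a * v + b)) = ENNReal.ofReal (|a| * |v - u|) := by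
  rw [Real.volume_interval, ← abs_mul]
  ring_nf

def affinePieceImage (x a b : ℕ → ℝ) (p : ℕ) : Set ℝ :=
  uIcc (a p * x p + b p) (a p * x (p + 1) + b p)

namespace PiecewiseAffinePartition

variable {h : ℝ → ℝ} {c : ℝ} {P : ℕ} {x a b : ℕ → ℝ}

theorem exists_piece (hpa : PiecewiseAffinePartition h c P x a b) {z : ℝ} (hz : z ∈ Ioc 0 c) :
    ∃ p < P, z ∈ Ioc (x p) (x (p + 1)) :=
  exists_mem_Ioc_of_lt_of_le x (hpa.1 ▸ hz.1) (hpa.2.1 ▸ hz.2)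

theorem subsingleton_fiber_inter_piece (hpa : PiecewiseAffinePartition h c P x a b) {p : ℕ}
    (hp : p < P) {y : ℝ} (hb : b p ≠ y) : {z ∈ Ioc (x p) (x (p + 1)) | h z = y}.Subsingleton := by
  rintro z ⟨hz, hzy⟩ z' ⟨hz', hz'y⟩
  rw [hpa.2.2.2 p hp z hz] at hzy
  rw [hpa.2.2.2 p hp z' hz'] at hz'y
  have ha : a p ≠ 0 := by
    rintro ha
    rw [ha, zero_mul, zero_add] at hzy
    exact hb hzy
  exact mul_left_cancel₀ ha (by linarith)

open Classical in
theorem encard_fiber_le (hpa : PiecewiseAffinePartition h c P x a b) {y : ℝ} (hy0 : h 0 ≠ y)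
    (hb : ∀ p < P, b p ≠ y) :
    {z ∈ Icc 0 c | h z = y}.encard ≤ #{p ∈ Finset.range P | y ∈ affinePieceImage x a b p} := by
  set T := {p ∈ Finset.range P | y ∈ affinePieceImage x a b p}
  have hcover : {z ∈ Icc 0 c | h z = y} ⊆ ⋃ p ∈ T, {z ∈ Ioc (x p) (x (p + 1)) | h z = y} := by
    rintro z ⟨hz, rfl⟩
    have hz0 : z ≠ 0 := by rintro rfl; exact hy0 rfl
    obtain ⟨p, hp, hzp⟩ := hpa.exists_piece ⟨hz.1.lt_of_ne' hz0, hz.2⟩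
    refine mem_biUnion (x := p) ?_ ⟨hzp, rfl⟩
    simp only [T, Finset.coe_filter, Finset.mem_range, mem_ofPred_eq, hpa.2.2.2 p hp z hzp]
    exact ⟨hp, affine_mem_uIcc (Ioc_subset_Icc_self hzp)⟩
  calc {z ∈ Icc 0 c | h z = y}.encard
      ≤ (⋃ p ∈ T, {z ∈ Ioc (x p) (x (p + 1)) | h z = y}).encard := encard_mono hcover
    _ ≤ ∑ p ∈ T, {z ∈ Ioc (x p) (x (p + 1)) | h z = y}.encard := T.set_encard_biUnion_le _
    _ ≤ ∑ p ∈ T, 1 := Finset.sum_le_sum fun p hp ↦ by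
        have hpP := Finset.mem_range.1 (Finset.mem_filter.1 hp).1
        exact encard_le_one_iff_subsingleton.2 (hpa.subsingleton_fiber_inter_piece hpP (hb p hpP))
    _ = #T := by simp

theorem sum_volume_affinePieceImage_le (hpa : PiecewiseAffinePartition h c P x a b) {K : ℝ}
    (hK : ∀ p < P, |a p| ≤ K) :
    ∑ p ∈ Finset.range P, volume (affinePieceImage x a b p) ≤ ENNReal.ofReal (c * K) := by
  obtain ⟨hx0, hxP, hmono, -⟩ := hpa
  have hlen : ∀ p ∈ Finset.range P, 0 ≤ x (p + 1) - x p := fun p hp ↦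
    (sub_pos.2 (hmono p (Finset.mem_range.1 hp))).le
  calc ∑ p ∈ Finset.range P, volume (affinePieceImage x a b p)
      ≤ ∑ p ∈ Finset.range P, ENNReal.ofReal (K * (x (p + 1) - x p)) := by
        refine Finset.sum_le_sum fun p hp ↦ ?_
        rw [affinePieceImage, volume_uIcc_affine, abs_of_nonneg (hlen p hp)]
        gcongr
        · exact hlen p hp
        · exact hK p (Finset.mem_range.1 hp)
    _ = ENNReal.ofReal (∑ p ∈ Finset.range P, K * (x (p + 1) - x p)) := by
        refine (ENNReal.ofReal_sum_of_nonneg fun p hp ↦ ?_).symm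
        exact mul_nonneg ((abs_nonneg _).trans (hK p (Finset.mem_range.1 hp))) (hlen p hp)
    _ = ENNReal.ofReal (c * K) := by
        rw [← Finset.mul_sum, Finset.sum_range_sub, hx0, hxP, sub_zero, mul_comm]

end PiecewiseAffinePartition

theorem crossing_lemma_general (c : ℝ) (h : ℝ → ℝ) (P : ℕ) (x a b : ℕ → ℝ)
    (hpa : PiecewiseAffinePartition h c P x a b)
    (K : ℝ) (hK : ∀ p < P, |a p| ≤ K)
    (t : ℕ) (A : Set ℝ)
    (hcard : ∀ y ∈ A, (t : ℕ∞) ≤ {z ∈ Set.Icc (0:ℝ) c | h z = y}.encard) :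
    volume A * (t : ENNReal) ≤ ENNReal.ofReal (c * K) := by
  classical
  have hN : volume (insert (h 0) (b '' Iio P)) = 0 :=
    ((finite_Iio P).image b).insert (h 0) |>.measure_zero _
  have hcover : ∀ᵐ y, y ∈ A → t ≤ #{p ∈ Finset.range P | y ∈ affinePieceImage x a b p} := by
    filter_upwards [measure_eq_zero_iff_ae_notMem.1 hN] with y hyN hyA
    have hy0 : h 0 ≠ y := fun hy ↦ hyN (hy ▸ mem_insert _ _)
    have hb : ∀ p < P, b p ≠ y := fun p hp hy ↦ hyN (mem_insert_of_mem _ ⟨p, hp, hy⟩)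
    exact_mod_cast (hcard y hyA).trans (hpa.encard_fiber_le hy0 hb)
  calc volume A * t ≤ ∑ p ∈ Finset.range P, volume (affinePieceImage x a b p) :=
        measure_mul_le_sum_of_le_card volume _ (fun p _ ↦ measurableSet_uIcc) hcover
    _ ≤ ENNReal.ofReal (c * K) := hpa.sum_volume_affinePieceImage_le hK

/-- If every `y ∈ A` has at least `t` preimages under `h` in `[0,c]`, then
`c * ‖h'‖_∞ ≥ λ(A) * t`, where `K` bounds the slopes of `h`. -/
theorem crossing_lemma (c : ℝ) (hc : 0 < c) (h : ℝ → ℝ) (P : ℕ) (x a b : ℕ → ℝ)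
    (hpa : PiecewiseAffinePartition h c P x a b)
    (K : ℝ) (hK : ∀ p < P, |a p| ≤ K)
    (t : ℕ) (ht : 0 < t) (A : Set ℝ) (hA : MeasurableSet A)
    (hcard : ∀ y ∈ A, (t : ℕ∞) ≤ {z ∈ Set.Icc (0:ℝ) c | h z = y}.encard) :
    volume A * (t : ENNReal) ≤ ENNReal.ofReal (c * K) :=
  crossing_lemma_general c h P x a b hpa K hK t A hcard
end

section
/- Let c > 0, let h : [0,c] → ℝ be a piecewise affine function with |h'(x)| ≤ 1 wherever defined, let δ > 0, and let U be a random variable uniformly distributed on an interval of length δ. Then for every positive integer t, the probability that #{x ∈ [0,c] : h(x) = U} ≥ t is at most c/(δ·t). -/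
/-! Away from the finitely many levels `h 0` and `b p` of flat pieces, a level `y` is attained at
most once on each piece, and only if `y` lies in the image of that piece. Hence the number of
solutions of `h z = y` is bounded by the number of pieces whose image contains `y`, a function
whose integral is `∑ |a p| (x (p + 1) - x p) ≤ c`. Markov's inequality bounds the measure of the
levels attained at least `t` times by `c / t`. -/

open MeasureTheory Set

open scoped ENNReal

theorem Set.InjOn.encard_fiber_le_indicator {α β : Type*} {f : α → β} {s : Set α}
    (hf : InjOn f s) (y : β) :
    {z ∈ s | f z = y}.encard ≤ (f '' s).indicator 1 y := by
  by_cases hy : y ∈ f '' s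
  · rw [indicator_of_mem hy, Pi.one_apply, encard_le_one_iff]
    rintro z w ⟨hz, rfl⟩ ⟨hw, hzw⟩
    exact hf hz hw hzw.symm
  · rw [indicator_of_notMem hy, nonpos_iff_eq_zero, encard_eq_zero, eq_empty_iff_forall_notMem]
    rintro z ⟨hz, rfl⟩
    exact hy (mem_image_of_mem f hz)

theorem Set.image_affine_uIcc {K : Type*} [Field K] [LinearOrder K] [IsStrictOrderedRing K]
    (a b l r : K) : (fun z => a * z + b) '' uIcc l r = uIcc (a * l + b) (a * r + b) := by
  rw [← image_add_const_uIcc, ← image_const_mul_uIcc, image_image]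

namespace PiecewiseAffinePartition

/-- An interval containing `h '' Ioc (x p) (x (p + 1))`, of length `|a p| * (x (p + 1) - x p)`. -/
def pieceImage (x a b : ℕ → ℝ) (p : ℕ) : Set ℝ :=
  uIcc (a p * x p + b p) (a p * x (p + 1) + b p)

theorem measurableSet_pieceImage (x a b : ℕ → ℝ) (p : ℕ) : MeasurableSet (pieceImage x a b p) :=
  measurableSet_uIcc

noncomputable def pieceCount (P : ℕ) (x a b : ℕ → ℝ) (y : ℝ) : ℝ≥0∞ :=
  ∑ p ∈ Finset.range P, (pieceImage x a b p).indicator 1 y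

theorem measurable_pieceCount (P : ℕ) (x a b : ℕ → ℝ) : Measurable (pieceCount P x a b) :=
  Finset.measurable_sum _ fun _ _ => measurable_one.indicator (measurableSet_pieceImage x a b _)

theorem volume_pieceImage {x a b : ℕ → ℝ} {p : ℕ} (hx : x p ≤ x (p + 1)) :
    volume (pieceImage x a b p) = ENNReal.ofReal (|a p| * (x (p + 1) - x p)) := by
  rw [pieceImage, Real.volume_interval, add_sub_add_right_eq_sub, ← mul_sub, abs_mul,
    abs_of_nonneg (sub_nonneg.2 hx)]

theorem lintegral_pieceCount_le (P : ℕ) {x a b : ℕ → ℝ} (hx : ∀ p < P, x p < x (p + 1))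
    (ha : ∀ p < P, |a p| ≤ 1) :
    ∫⁻ y, pieceCount P x a b y ≤ ENNReal.ofReal (x P - x 0) := by
  have hlen : ∀ p ∈ Finset.range P, 0 ≤ x (p + 1) - x p := fun p hp =>
    sub_nonneg.2 (hx p (Finset.mem_range.1 hp)).le
  calc ∫⁻ y, pieceCount P x a b y
      = ∑ p ∈ Finset.range P, volume (pieceImage x a b p) := by
        simp only [pieceCount]
        rw [lintegral_finsetSum _ fun _ _ =>
          measurable_one.indicator (measurableSet_pieceImage x a b _)]
        simp only [lintegral_indicator_one (measurableSet_pieceImage x a b _)]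
    _ ≤ ∑ p ∈ Finset.range P, ENNReal.ofReal (x (p + 1) - x p) := by
        refine Finset.sum_le_sum fun p hp => ?_
        rw [volume_pieceImage (sub_nonneg.1 (hlen p hp))]
        exact ENNReal.ofReal_le_ofReal
          (mul_le_of_le_one_left (hlen p hp) (ha p (Finset.mem_range.1 hp)))
    _ = ENNReal.ofReal (x P - x 0) := by
        rw [← ENNReal.ofReal_sum_of_nonneg hlen, Finset.sum_range_sub]

variable {h : ℝ → ℝ} {c : ℝ} {P : ℕ} {x a b : ℕ → ℝ}

theorem image_Ioc_subset_pieceImage (hpa : PiecewiseAffinePartition h c P x a b) {p : ℕ}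
    (hp : p < P) : h '' Ioc (x p) (x (p + 1)) ⊆ pieceImage x a b p := by
  rw [image_congr (hpa.2.2.2 p hp), pieceImage, ← image_affine_uIcc]
  exact image_mono (Ioc_subset_Icc_self.trans Icc_subset_uIcc)

theorem encard_fiber_Ioc_le_indicator (hpa : PiecewiseAffinePartition h c P x a b) {p : ℕ}
    (hp : p < P) {y : ℝ} (hy : a p = 0 → b p ≠ y) :
    {z ∈ Ioc (x p) (x (p + 1)) | h z = y}.encard ≤ (pieceImage x a b p).indicator 1 y := by
  have haff := hpa.2.2.2 p hp
  by_cases ha : a p = 0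
  · refine (encard_eq_zero.2 (eq_empty_iff_forall_notMem.2 ?_)).trans_le zero_le
    rintro z ⟨hz, rfl⟩
    exact hy ha (by rw [haff z hz, ha, zero_mul, zero_add])
  · have hinj : InjOn h (Ioc (x p) (x (p + 1))) := fun z hz w hw hzw => by
      rw [haff z hz, haff w hw] at hzw
      exact mul_left_cancel₀ ha (add_right_cancel hzw)
    exact (hinj.encard_fiber_le_indicator y).trans
      (indicator_le_indicator_of_subset (hpa.image_Ioc_subset_pieceImage hp) (fun _ => zero_le) y)

theorem encard_fiber_le_pieceCount (hpa : PiecewiseAffinePartition h c P x a b) {y : ℝ}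
    (hy0 : h 0 ≠ y) (hyb : ∀ p < P, a p = 0 → b p ≠ y) :
    ({z ∈ Icc 0 c | h z = y}.encard : ℝ≥0∞) ≤ pieceCount P x a b y := by
  have hsub : {z ∈ Icc 0 c | h z = y} ⊆
      ⋃ p ∈ Finset.range P, {z ∈ Ioc (x p) (x (p + 1)) | h z = y} := by
    rintro z ⟨hz, rfl⟩
    have hz' : z ∈ Ioc (x 0) (x P) := by
      rw [hpa.1, hpa.2.1]
      exact ⟨hz.1.lt_of_ne fun hz0 => hy0 (hz0 ▸ rfl), hz.2⟩
    obtain ⟨p, hp, hzp⟩ := mem_iUnion₂.1 (Ioc_subset_biUnion_Ioc P x hz')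
    exact mem_biUnion hp ⟨hzp, rfl⟩
  have hcount : {z ∈ Icc 0 c | h z = y}.encard ≤
      ∑ p ∈ Finset.range P, (pieceImage x a b p).indicator 1 y :=
    (encard_mono hsub).trans <| (Finset.set_encard_biUnion_le _ _).trans <|
      Finset.sum_le_sum fun p hp =>
        hpa.encard_fiber_Ioc_le_indicator (Finset.mem_range.1 hp) (hyb p (Finset.mem_range.1 hp))
  refine (ENat.toENNReal_le.2 hcount).trans_eq ?_
  rw [pieceCount, ← ENat.toENNRealRingHom_apply, map_sum]
  refine Finset.sum_congr rfl fun p _ => ?_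
  by_cases hy : y ∈ pieceImage x a b p <;> simp [hy]

theorem ae_encard_fiber_le_pieceCount (hpa : PiecewiseAffinePartition h c P x a b) :
    ∀ᵐ y, ({z ∈ Icc 0 c | h z = y}.encard : ℝ≥0∞) ≤ pieceCount P x a b y := by
  have hfin : (insert (h 0) (b '' Iio P)).Finite := ((finite_Iio P).image b).insert _
  filter_upwards [hfin.countable.ae_notMem volume] with y hy
  exact hpa.encard_fiber_le_pieceCount (fun h0 => hy (h0 ▸ mem_insert _ _))
    fun p hp _ hb => hy (hb ▸ mem_insert_of_mem _ (mem_image_of_mem b hp))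

end PiecewiseAffinePartition

theorem prob_many_crossings_le_general (c : ℝ) (h : ℝ → ℝ) (P : ℕ) (x a b : ℕ → ℝ)
    (hpa : PiecewiseAffinePartition h c P x a b)
    (hslope : ∀ p < P, |a p| ≤ 1)
    (δ : ℝ) (hδ : 0 < δ) (u : ℝ) (t : ℕ) (ht : 0 < t) :
    (ENNReal.ofReal δ)⁻¹ *
        volume {y ∈ Set.Icc u (u + δ) |
          (t : ℕ∞) ≤ {z ∈ Set.Icc (0:ℝ) c | h z = y}.encard}
      ≤ ENNReal.ofReal (c / (δ * t)) := by
  open PiecewiseAffinePartition in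
  have hcount : volume {y ∈ Icc u (u + δ) | (t : ℕ∞) ≤ {z ∈ Icc (0:ℝ) c | h z = y}.encard} ≤
      volume {y | (t : ℝ≥0∞) ≤ pieceCount P x a b y} := by
    refine measure_mono_ae ?_
    filter_upwards [hpa.ae_encard_fiber_le_pieceCount] with y hy hyt
    exact le_trans (by exact_mod_cast ENat.toENNReal_le.2 hyt.2) hy
  have hmarkov : volume {y | (t : ℝ≥0∞) ≤ pieceCount P x a b y} ≤ ENNReal.ofReal c / t := by
    refine (meas_ge_le_lintegral_div (measurable_pieceCount P x a b).aemeasurable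
      (by exact_mod_cast ht.ne') (ENNReal.natCast_ne_top t)).trans ?_
    gcongr
    simpa [hpa.1, hpa.2.1] using lintegral_pieceCount_le P hpa.2.2.1 hslope
  calc _ ≤ (ENNReal.ofReal δ)⁻¹ * (ENNReal.ofReal c / t) := by gcongr; exact hcount.trans hmarkov
    _ = ENNReal.ofReal (c / (δ * t)) := by
      rw [ENNReal.ofReal_div_of_pos (by positivity), ENNReal.ofReal_mul hδ.le,
        ENNReal.ofReal_natCast, ENNReal.div_eq_inv_mul, ENNReal.div_eq_inv_mul,
        ENNReal.mul_inv (by simp [hδ]) (by simp), mul_assoc]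

/-- For `h` piecewise affine on `[0,c]` with slopes bounded by `1` and `U` uniformly
distributed on an interval of length `δ`, the probability that `h(x) = U` has at least `t`
solutions is at most `c/(δ·t)`. -/
theorem prob_many_crossings_le (c : ℝ) (hc : 0 < c) (h : ℝ → ℝ) (P : ℕ) (x a b : ℕ → ℝ)
    (hpa : PiecewiseAffinePartition h c P x a b)
    (hslope : ∀ p < P, |a p| ≤ 1)
    (δ : ℝ) (hδ : 0 < δ) (u : ℝ) (t : ℕ) (ht : 0 < t) :
    (ENNReal.ofReal δ)⁻¹ *
        volume {y ∈ Set.Icc u (u + δ) |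
          (t : ℕ∞) ≤ {z ∈ Set.Icc (0:ℝ) c | h z = y}.encard}
      ≤ ENNReal.ofReal (c / (δ * t)) :=
  prob_many_crossings_le_general c h P x a b hpa hslope δ hδ u t ht
end

section
/- Let h be a piecewise affine function on [0,c] with affine pieces I_1, …, I_P (disjoint half-open intervals covering [0,c]), and let t ∈ ℕ and A be a measurable set such that every y ∈ A has at least t preimages under h in [0,c]. Then the sum over p of the Lebesgue measure of h(I_p) is at least t · λ(A). -/
open MeasureTheory Set

/-! Off the countable, hence null, set of values `{h 0} ∪ {b p}`, the fibre of `h` meets each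
piece `I_p` in at most one point, so every such `y ∈ A` lies in at least `t` of the images
`h '' I_p`. Markov's inequality for the counting function `∑ p, 𝟙_{h '' I_p}`, whose integral is
`∑ p, λ (h '' I_p)`, then gives the bound. -/

open Classical in
theorem natCast_mul_measure_le_sum_measure {α ι : Type*} [MeasurableSpace α] {μ : Measure α}
    {F : Finset ι} {s : ι → Set α} (hs : ∀ p ∈ F, MeasurableSet (s p)) {A : Set α} {t : ℕ}
    (hA : ∀ᵐ y ∂μ, y ∈ A → t ≤ ({p ∈ F | y ∈ s p} : Finset ι).card) :
    t * μ A ≤ ∑ p ∈ F, μ (s p) := by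
  set N : α → ENNReal := fun y ↦ ∑ p ∈ F, (s p).indicator 1 y
  have hN : ∀ y, N y = ({p ∈ F | y ∈ s p} : Finset ι).card := fun y ↦ by
    simp only [N, Set.indicator_apply, Pi.one_apply, Finset.sum_boole]
  have hNmeas : ∀ p ∈ F, Measurable ((s p).indicator (1 : α → ENNReal)) :=
    fun p hp ↦ measurable_one.indicator (hs p hp)
  calc (t : ENNReal) * μ A ≤ t * μ {y | (t : ENNReal) ≤ N y} := by
        refine mul_le_mul_right (measure_mono_ae (hA.mono fun y hy hyA ↦ ?_)) _
        change (t : ENNReal) ≤ N y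
        exact hN y ▸ Nat.cast_le.2 (hy hyA)
    _ ≤ ∫⁻ y, N y ∂μ := mul_meas_ge_le_lintegral (Finset.measurable_sum F hNmeas) _
    _ = ∑ p ∈ F, μ (s p) := by
        rw [lintegral_finsetSum F hNmeas]
        exact Finset.sum_congr rfl fun p hp ↦ lintegral_indicator_one (hs p hp)

theorem encard_fiber_le_card_filter {α β ι : Type*} {f : α → β} {S : Set α} {F : Finset ι}
    {I : ι → Set α} {y : β} (hcover : ∀ z ∈ S, f z = y → ∃ p ∈ F, z ∈ I p)
    (hfib : ∀ p ∈ F, {z ∈ I p | f z = y}.Subsingleton) [DecidablePred (y ∈ f '' I ·)] :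
    {z ∈ S | f z = y}.encard ≤ ({p ∈ F | y ∈ f '' I p} : Finset ι).card := by
  set T : Finset ι := {p ∈ F | y ∈ f '' I p}
  have hsub : {z ∈ S | f z = y} ⊆ ⋃ p ∈ T, {z ∈ I p | f z = y} := by
    rintro z ⟨hz, hzy⟩
    obtain ⟨p, hp, hzp⟩ := hcover z hz hzy
    exact Set.mem_biUnion (Finset.mem_filter.2 ⟨hp, z, hzp, hzy⟩) ⟨hzp, hzy⟩
  calc {z ∈ S | f z = y}.encard ≤ ∑ p ∈ T, {z ∈ I p | f z = y}.encard :=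
        (Set.encard_le_encard hsub).trans (T.set_encard_biUnion_le _)
    _ ≤ ∑ _p ∈ T, 1 := Finset.sum_le_sum fun p hp ↦
        Set.encard_le_one_iff_subsingleton.2 (hfib p (Finset.mem_filter.1 hp).1)
    _ = T.card := by simp

theorem subsingleton_fiber_of_eqOn_affine {h : ℝ → ℝ} {I : Set ℝ} {a b y : ℝ}
    (haff : ∀ x ∈ I, h x = a * x + b) (hy : a ≠ 0 ∨ y ≠ b) :
    {z ∈ I | h z = y}.Subsingleton := by
  rintro z ⟨hz, hzy⟩ w ⟨hw, hwy⟩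
  rw [haff z hz] at hzy
  rw [haff w hw] at hwy
  have ha : a ≠ 0 := hy.elim id fun hyb ha ↦ hyb (by simp [← hzy, ha])
  exact mul_left_cancel₀ ha (by linarith)

theorem sum_image_measure_ge_general (c : ℝ) (h : ℝ → ℝ) (P : ℕ) (r s a b : ℕ → ℝ)
    (hcover : Set.Ioc (0:ℝ) c = ⋃ p ∈ Finset.range P, Set.Ioc (r p) (s p))
    (haff : ∀ p < P, ∀ y ∈ Set.Ioc (r p) (s p), h y = a p * y + b p)
    (t : ℕ) (A : Set ℝ)
    (hcard : ∀ y ∈ A, (t : ℕ∞) ≤ {z ∈ Set.Icc (0:ℝ) c | h z = y}.encard) :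
    (t : ENNReal) * volume A ≤
      ∑ p ∈ Finset.range P, volume (h '' Set.Ioc (r p) (s p)) := by
  classical
  have himg : ∀ p ∈ Finset.range P, MeasurableSet (h '' Ioc (r p) (s p)) := fun p hp ↦
    have hcont : ContinuousOn h (Ioc (r p) (s p)) := (continuous_const.mul continuous_id
      |>.add continuous_const).continuousOn.congr (haff p (Finset.mem_range.1 hp))
    (isPreconnected_Ioc.image h hcont).ordConnected.measurableSet
  have hE : (insert (h 0) (b '' Iio P)).Countable := ((finite_Iio P).image b).insert _ |>.countable
  refine natCast_mul_measure_le_sum_measure himg ?_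
  filter_upwards [hE.ae_notMem volume] with y hyE hyA
  simp only [mem_insert_iff, mem_image, mem_Iio, not_or, not_exists, not_and] at hyE
  have hcov : ∀ z ∈ Icc 0 c, h z = y → ∃ p ∈ Finset.range P, z ∈ Ioc (r p) (s p) := by
    intro z hz hzy
    have hz0 : z ≠ 0 := by rintro rfl; exact hyE.1 hzy.symm
    have hzI : z ∈ Ioc 0 c := ⟨hz.1.lt_of_ne' hz0, hz.2⟩
    rw [hcover, mem_iUnion₂] at hzI
    exact hzI.imp fun p ⟨hp, hzp⟩ ↦ ⟨hp, hzp⟩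
  have hfib : ∀ p ∈ Finset.range P, {z ∈ Ioc (r p) (s p) | h z = y}.Subsingleton := fun p hp ↦
    subsingleton_fiber_of_eqOn_affine (haff p (Finset.mem_range.1 hp))
      (Or.inr fun hyb ↦ hyE.2 p (Finset.mem_range.1 hp) hyb.symm)
  exact_mod_cast (hcard y hyA).trans (encard_fiber_le_card_filter hcov hfib)

/-- If `h` is affine on disjoint half-open pieces `I_p = (r_p, s_p]` covering `(0,c]`
and every `y ∈ A` has at least `t` preimages under `h` in `[0,c]`, then
`∑_p λ(h(I_p)) ≥ t · λ(A)`. -/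
theorem sum_image_measure_ge (c : ℝ) (hc : 0 < c) (h : ℝ → ℝ) (P : ℕ) (r s a b : ℕ → ℝ)
    (hcover : Set.Ioc (0:ℝ) c = ⋃ p ∈ Finset.range P, Set.Ioc (r p) (s p))
    (hdisj : ∀ p < P, ∀ q < P, p ≠ q →
      Disjoint (Set.Ioc (r p) (s p)) (Set.Ioc (r q) (s q)))
    (haff : ∀ p < P, ∀ y ∈ Set.Ioc (r p) (s p), h y = a p * y + b p)
    (t : ℕ) (A : Set ℝ) (hA : MeasurableSet A)
    (hcard : ∀ y ∈ A, (t : ℕ∞) ≤ {z ∈ Set.Icc (0:ℝ) c | h z = y}.encard) :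
    (t : ENNReal) * volume A ≤
      ∑ p ∈ Finset.range P, volume (h '' Set.Ioc (r p) (s p)) :=
  sum_image_measure_ge_general c h P r s a b hcover haff t A hcard
end

section
/- Let f : ℝ → ℝ^q be piecewise affine with at most r affine pieces along a line segment κ, and let g : ℝ^q → ℝ^p be a function that is piecewise affine with at most s affine pieces along every line. Then g ∘ f restricted to κ has at most r·s affine pieces. -/
open Set

/-- `f` has at most `P` affine pieces on `Ω'`: there are `P` open sets whose closures
cover the space and on (the intersection of `Ω'` with) each of which `f` is affine. -/
def PiecesLE {E F : Type*} [NormedAddCommGroup E] [NormedSpace ℝ E]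
    [AddCommGroup F] [Module ℝ F] (f : E → F) (Ω' : Set E) (P : ℕ) : Prop :=
  ∃ U : Fin P → Set E, (∀ i, IsOpen (U i)) ∧ (⋃ i, closure (U i)) = Set.univ ∧
    ∀ i, ∃ (A : E →ₗ[ℝ] F) (b : F), ∀ x ∈ Ω' ∩ U i, f x = A x + b

/-! On the piece `U i` of `f`, the map `f` traces the line `t ↦ t • A 1 + b`; cutting `U i`
along the `s` pieces of `g` on that line gives `r·s` open sets on which `g ∘ f` is affine.
Their closures still cover, because cutting an open set `U` by sets whose closures cover
loses nothing in the closure: `U ∩ closure V ⊆ closure (U ∩ V)`. -/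

section Topology

variable {X ι κ : Type*} [TopologicalSpace X]

theorem IsOpen.closure_subset_iUnion_closure_inter [Finite κ] {U : Set X} (hU : IsOpen U)
    {V : κ → Set X} (hV : ⋃ j, closure (V j) = univ) :
    closure U ⊆ ⋃ j, closure (U ∩ V j) := by
  have hcover : U ⊆ ⋃ j, closure (U ∩ V j) := fun x hx => by
    obtain ⟨j, hj⟩ := mem_iUnion.mp (hV ▸ mem_univ x)
    exact mem_iUnion.mpr ⟨j, hU.inter_closure ⟨hx, hj⟩⟩
  exact closure_minimal hcover (isClosed_iUnion_of_finite fun _ => isClosed_closure)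

theorem iUnion_closure_inter_eq_univ [Finite κ] {U : ι → Set X} (hU : ∀ i, IsOpen (U i))
    (hUcover : ⋃ i, closure (U i) = univ) {V : ι → κ → Set X}
    (hVcover : ∀ i, ⋃ j, closure (V i j) = univ) :
    ⋃ k : ι × κ, closure (U k.1 ∩ V k.1 k.2) = univ := by
  refine eq_univ_of_forall fun x => ?_
  obtain ⟨i, hi⟩ := mem_iUnion.mp (hUcover ▸ mem_univ x)
  obtain ⟨j, hj⟩ := mem_iUnion.mp ((hU i).closure_subset_iUnion_closure_inter (hVcover i) hi)
  exact mem_iUnion.mpr ⟨(i, j), hj⟩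

end Topology

theorem PiecesLE.comp_of_forall_line {F G : Type*} [AddCommGroup F] [Module ℝ F]
    [AddCommGroup G] [Module ℝ G] {f : ℝ → F} {g : F → G} {Ω : Set ℝ} {r s : ℕ}
    (hf : PiecesLE f Ω r) (hg : ∀ v w : F, PiecesLE (fun t : ℝ => g (t • v + w)) univ s) :
    PiecesLE (g ∘ f) Ω (r * s) := by
  obtain ⟨U, hUopen, hUcover, hUaff⟩ := hf
  choose A b hAb using hUaff
  choose V hVopen hVcover hVaff using fun i => hg (A i 1) (b i)
  choose B c hBc using hVaff
  have hf_line : ∀ i, ∀ x ∈ Ω ∩ U i, f x = x • A i 1 + b i := fun i x hx => by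
    rw [hAb i x hx, ← LinearMap.map_smul, smul_eq_mul, mul_one]
  let e := (finProdFinEquiv (m := r) (n := s)).symm
  refine ⟨fun k => U (e k).1 ∩ V (e k).1 (e k).2, fun k => (hUopen _).inter (hVopen _ _),
    ?_, fun k => ⟨B (e k).1 (e k).2, c (e k).1 (e k).2, ?_⟩⟩
  · exact (e.surjective.iUnion_comp _).trans
      (iUnion_closure_inter_eq_univ hUopen hUcover hVcover)
  · rintro x ⟨hx, hxU, hxV⟩
    rw [Function.comp_apply, hf_line _ x ⟨hx, hxU⟩]
    exact hBc _ _ x ⟨mem_univ x, hxV⟩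

/-- If `f : ℝ → ℝ^q` has at most `r` affine pieces on the segment `κ = [κa, κb]` and
`g : ℝ^q → ℝ^p` has at most `s` affine pieces along every line, then `g ∘ f` has at most
`r·s` affine pieces on `κ`. -/
theorem pieces_comp_le (q p r s : ℕ) (κa κb : ℝ)
    (f : ℝ → (Fin q → ℝ)) (g : (Fin q → ℝ) → (Fin p → ℝ))
    (hf : PiecesLE f (Set.Icc κa κb) r)
    (hg : ∀ v w : Fin q → ℝ, PiecesLE (fun t : ℝ => g (t • v + w)) Set.univ s) :
    PiecesLE (g ∘ f) (Set.Icc κa κb) (r * s) :=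
  hf.comp_of_forall_line hg
end

section
/- Let λ > 1 and L ≥ 2, and define matrices A_1 = ((1+ε)λ, λ)^T ∈ ℝ^{2×1}, A_j = diag(λ, λ) ∈ ℝ^{2×2} for 2 ≤ j ≤ L−1, and A_L = ((1+λ^{−L})λ, −λ) ∈ ℝ^{1×2}, where ε ≥ 0 perturbs only the first entry of A_1. Then for every x ∈ ℝ, the product A_L A_{L−1} ⋯ A_1 x equals (1 + ε(1+λ^L)) x; in particular, the output error relative to the unperturbed case (ε = 0) is ε(1+λ^L)·x. -/
/-!
The middle factors are the scalar matrix `λ • 1`, so the product collapses to `λ ^ (L - 2)` times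
the `1 × 1` product `A_L A_1`, i.e. to `λ ^ L ((1 + λ⁻ᴸ)(1 + ε) - 1)`. The correction `λ⁻ᴸ` in `A_L`
cancels the amplification `λ ^ L` exactly when `ε = 0`, while the perturbation `ε` is amplified by
`λ ^ L + 1`.
-/

open Matrix

theorem Matrix.fin_two_scalar_eq_smul_one {α : Type*} [Semiring α] (a : α) :
    !![a, 0; 0, a] = a • (1 : Matrix (Fin 2) (Fin 2) α) := by
  ext i j
  fin_cases i <;> fin_cases j <;> simp

theorem Matrix.row_fin_two_mul_col_fin_two {α : Type*} [NonUnitalNonAssocSemiring α] (a b c d : α) :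
    !![a, b] * !![c; d] = !![a * c + b * d] := by
  ext i j
  fin_cases i; fin_cases j
  simp [Matrix.mul_apply, Fin.sum_univ_succ]

theorem Matrix.fin_one_mulVec_const_apply {α : Type*} [NonUnitalNonAssocSemiring α] (c x : α) :
    !![c].mulVec (fun _ => x) 0 = c * x := by
  simp [mulVec, dotProduct]

theorem mul_one_add_inv_mul_one_add_sub_one {K : Type*} [Field K] {x : K} (hx : x ≠ 0) (ε : K) :
    x * ((1 + x⁻¹) * (1 + ε) - 1) = 1 + ε * (1 + x) := by
  field_simp
  ring

theorem perturbed_matrix_product_general (l ε : ℝ) (hl : 1 < l)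
    (L : ℕ) (hL : 2 ≤ L) :
    ((!![(1 + (l ^ L)⁻¹) * l, -l] : Matrix (Fin 1) (Fin 2) ℝ) *
        (!![l, 0; 0, l] : Matrix (Fin 2) (Fin 2) ℝ) ^ (L - 2) *
        (!![(1 + ε) * l; l] : Matrix (Fin 2) (Fin 1) ℝ)
      = !![1 + ε * (1 + l ^ L)]) ∧
    ∀ x : ℝ,
      ((!![(1 + (l ^ L)⁻¹) * l, -l] : Matrix (Fin 1) (Fin 2) ℝ) *
          (!![l, 0; 0, l] : Matrix (Fin 2) (Fin 2) ℝ) ^ (L - 2) *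
          (!![(1 + ε) * l; l] : Matrix (Fin 2) (Fin 1) ℝ)).mulVec (fun _ => x) 0
        - x = ε * (1 + l ^ L) * x := by
  have hlL : l ^ L ≠ 0 := pow_ne_zero _ (by positivity)
  have hpow : l ^ (L - 2) * (l * l) = l ^ L := by
    rw [← sq, ← pow_add, Nat.sub_add_cancel hL]
  have hprod : (!![(1 + (l ^ L)⁻¹) * l, -l] : Matrix (Fin 1) (Fin 2) ℝ) *
        (!![l, 0; 0, l] : Matrix (Fin 2) (Fin 2) ℝ) ^ (L - 2) *
        (!![(1 + ε) * l; l] : Matrix (Fin 2) (Fin 1) ℝ) = !![1 + ε * (1 + l ^ L)] := by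
    rw [fin_two_scalar_eq_smul_one, smul_pow, one_pow, Matrix.mul_smul, Matrix.mul_one,
      Matrix.smul_mul, row_fin_two_mul_col_fin_two,
      ← mul_one_add_inv_mul_one_add_sub_one hlL ε, ← hpow]
    ext i j
    fin_cases i; fin_cases j
    simp only [Matrix.smul_apply, of_apply, cons_val', cons_val_fin_one, smul_eq_mul]
    ring
  refine ⟨hprod, fun x => ?_⟩
  rw [hprod, fin_one_mulVec_const_apply]
  ring

/-- For `λ > 1`, `L ≥ 2` and a relative perturbation `ε ≥ 0` of the first entry of `A_1`,
the product `A_L A_{L-1} ⋯ A_1` equals multiplication by `1 + ε(1 + λ^L)`; in particular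
the error relative to the unperturbed case is `ε(1 + λ^L)·x`. -/
theorem perturbed_matrix_product (l ε : ℝ) (hl : 1 < l) (hε : 0 ≤ ε)
    (L : ℕ) (hL : 2 ≤ L) :
    ((!![(1 + (l ^ L)⁻¹) * l, -l] : Matrix (Fin 1) (Fin 2) ℝ) *
        (!![l, 0; 0, l] : Matrix (Fin 2) (Fin 2) ℝ) ^ (L - 2) *
        (!![(1 + ε) * l; l] : Matrix (Fin 2) (Fin 1) ℝ)
      = !![1 + ε * (1 + l ^ L)]) ∧
    ∀ x : ℝ,
      ((!![(1 + (l ^ L)⁻¹) * l, -l] : Matrix (Fin 1) (Fin 2) ℝ) *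
          (!![l, 0; 0, l] : Matrix (Fin 2) (Fin 2) ℝ) ^ (L - 2) *
          (!![(1 + ε) * l; l] : Matrix (Fin 2) (Fin 1) ℝ)).mulVec (fun _ => x) 0
        - x = ε * (1 + l ^ L) * x :=
  perturbed_matrix_product_general l ε hl L hL
end
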